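/- arXiv:1812.08762 — 6 statements merged into one kernel-verified Lean document; each statement's English description precedes it below -/
import Mathlib

section
/- Let {E_i} be a MIC with Gram matrix G. Then {E_i} is unbiased (tr(E_i) = 1/d for all i) if and only if the maximal eigenvalue of G equals 1/d. -/
open Matrix BigOperators ComplexOrder

/-- A MIC: `(card n) = d²` positive semidefinite operators on a `d`-dimensional
complex Hilbert space (with `d = card m`), summing to the identity and linearly
independent over the reals (equivalently, over the Hermitian operators). -/
def IsMIC {n m : Type*} [Fintype n] [Fintype m] [DecidableEq m]
    (E : n → Matrix m m ℂ) : Prop :=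
  Fintype.card n = (Fintype.card m) ^ 2 ∧ (∀ i, (E i).PosSemidef) ∧
    (∑ i, E i = 1) ∧ LinearIndependent ℝ E

/-- The Gram matrix of a MIC, `G i j = tr (E i * E j)` (real, since the operators
are positive semidefinite). -/
noncomputable def gram {n m : Type*} [Fintype n] [Fintype m]
    (E : n → Matrix m m ℂ) : Matrix n n ℝ :=
  Matrix.of fun i j => ((E i * E j).trace).re

/-!
The Gram matrix `G` of a MIC is symmetric with nonnegative entries, and its `i`-th row sum is
`tr Eᵢ`, because `∑ⱼ Eⱼ = 1`; the row sums add up to `tr 1 = d`. Testing `G` against the all-ones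
vector `𝟙` of squared length `d²` gives `λ_max ≥ 𝟙ᵀG𝟙 / 𝟙ᵀ𝟙 = 1/d`.

If the MIC is unbiased, every row sum is `1/d`, so by Gershgorin every eigenvalue is at most `1/d`.
Conversely, if `λ_max = 1/d`, then `(1/d) • 1 - G` is positive semidefinite and its quadratic form
vanishes at `𝟙`, so `𝟙` lies in its kernel: `G𝟙 = (1/d) 𝟙`, i.e. every `tr Eᵢ` equals `1/d`.
-/

namespace Matrix

variable {n : Type*} [Fintype n] [DecidableEq n]

theorem PosSemidef.trace_mul_nonneg {𝕜 : Type*} [RCLike 𝕜] {A B : Matrix n n 𝕜}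
    (hA : A.PosSemidef) (hB : B.PosSemidef) : 0 ≤ (A * B).trace := by
  open scoped MatrixOrder in
  obtain ⟨C, rfl⟩ : ∃ C : Matrix n n 𝕜, B = Cᴴ * C := by
    simpa [star_eq_conjTranspose] using CStarAlgebra.nonneg_iff_eq_star_mul_self.mp hB.nonneg
  rw [← mul_assoc, trace_mul_comm, ← mul_assoc]
  exact (hA.mul_mul_conjTranspose_same C).trace_nonneg

theorem IsHermitian.posSemidef_smul_one_sub {𝕜 : Type*} [RCLike 𝕜] {A : Matrix n n 𝕜}
    (hA : A.IsHermitian) {c : ℝ} (hc : ∀ i, hA.eigenvalues i ≤ c) :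
    (c • 1 - A).PosSemidef := by
  open scoped MatrixOrder in
  have hle : A ≤ algebraMap ℝ _ c := le_algebraMap_of_spectrum_le (by
    rw [hA.spectrum_real_eq_range_eigenvalues]
    rintro _ ⟨i, rfl⟩
    exact hc i) hA
  simpa [le_iff, Algebra.algebraMap_eq_smul_one] using hle

theorem IsHermitian.hasEigenvalue_eigenvalues {A : Matrix n n ℝ} (hA : A.IsHermitian) (i : n) :
    Module.End.HasEigenvalue (toLin' A) (hA.eigenvalues i) := by
  rw [Module.End.hasEigenvalue_iff_mem_spectrum, spectrum_toLin']
  exact hA.eigenvalues_mem_spectrum_real i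

theorem le_of_hasEigenvalue_of_nonneg_of_sum_le {A : Matrix n n ℝ} (hA : ∀ i j, 0 ≤ A i j)
    {c : ℝ} (hc : ∀ i, ∑ j, A i j ≤ c) {μ : ℝ} (hμ : Module.End.HasEigenvalue (toLin' A) μ) :
    μ ≤ c := by
  obtain ⟨k, hk⟩ := eigenvalue_mem_ball hμ
  have hrow : A k k + ∑ j ∈ Finset.univ.erase k, ‖A k j‖ = ∑ j, A k j := by
    simp only [Real.norm_of_nonneg (hA k _), Finset.add_sum_erase _ _ (Finset.mem_univ k)]
  linarith [(abs_le.mp (Metric.mem_closedBall.mp hk)).2, hc k]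

theorem smul_one_sub_mulVec_one_apply (A : Matrix n n ℝ) (c : ℝ) (i : n) :
    ((c • 1 - A) *ᵥ 1) i = c - ∑ j, A i j := by
  simp [one_apply, mulVec, dotProduct_one]

theorem IsHermitian.iSup_eigenvalues_eq_iff_sum_eq [Nonempty n] {A : Matrix n n ℝ}
    (hA : A.IsHermitian) (hnonneg : ∀ i j, 0 ≤ A i j) {c : ℝ}
    (htotal : ∑ i, ∑ j, A i j = c * Fintype.card n) :
    ⨆ i, hA.eigenvalues i = c ↔ ∀ i, ∑ j, A i j = c := by
  set μ := ⨆ i, hA.eigenvalues i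
  have hP : (μ • 1 - A).PosSemidef :=
    hA.posSemidef_smul_one_sub fun i => le_ciSup (Set.finite_range _).bddAbove i
  have hform : star 1 ⬝ᵥ (μ • 1 - A) *ᵥ 1 = (μ - c) * Fintype.card n := by
    simp only [star_one, one_dotProduct, smul_one_sub_mulVec_one_apply, Finset.sum_sub_distrib,
      htotal, Finset.sum_const, Finset.card_univ, nsmul_eq_mul]
    ring
  have hcard : (0 : ℝ) < Fintype.card n := by exact_mod_cast Fintype.card_pos
  have hle : c ≤ μ := by
    have := hP.dotProduct_mulVec_nonneg 1
    rw [hform] at this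
    nlinarith
  constructor
  · intro hμ i
    have hker : (μ • 1 - A) *ᵥ 1 = 0 := by
      rw [← hP.dotProduct_mulVec_zero_iff, hform, hμ, sub_self, zero_mul]
    have := congrFun hker i
    rw [smul_one_sub_mulVec_one_apply, hμ, Pi.zero_apply, sub_eq_zero] at this
    exact this.symm
  · intro hrow
    refine le_antisymm (ciSup_le fun i => ?_) hle
    exact le_of_hasEigenvalue_of_nonneg_of_sum_le hnonneg (fun j => (hrow j).le)
      (hA.hasEigenvalue_eigenvalues i)

end Matrix

section

variable {n m : Type*} [Fintype n] [Fintype m] [DecidableEq m] {E : n → Matrix m m ℂ}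

theorem gram_nonneg (hE : ∀ i, (E i).PosSemidef) (i j : n) : 0 ≤ gram E i j :=
  (Complex.nonneg_iff.mp ((hE i).trace_mul_nonneg (hE j))).1

theorem sum_gram_apply (hE : ∑ i, E i = 1) (i : n) : ∑ j, gram E i j = (E i).trace.re := by
  simp only [_root_.gram, of_apply, ← Complex.re_sum, ← trace_sum, ← Finset.mul_sum, hE, mul_one]

theorem sum_trace_eq_card (hE : ∑ i, E i = 1) : ∑ i, (E i).trace = Fintype.card m := by
  rw [← trace_sum, hE, trace_one]

end

/-- A MIC is unbiased iff the maximal eigenvalue of its Gram matrix is `1/d`. -/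
theorem stmt1 {d : ℕ} (hd : 0 < d) (E : Fin (d ^ 2) → Matrix (Fin d) (Fin d) ℂ)
    (hMIC : IsMIC E) (hG : (gram E).IsHermitian) :
    (∀ i, (E i).trace = (1 / d : ℂ)) ↔ (⨆ i, hG.eigenvalues i) = 1 / d := by
  obtain ⟨-, hpsd, hsum, -⟩ := hMIC
  have : Nonempty (Fin (d ^ 2)) := ⟨⟨0, by positivity⟩⟩
  have htotal : ∑ i, ∑ j, gram E i j = 1 / d * Fintype.card (Fin (d ^ 2)) := by
    simp only [sum_gram_apply hsum, ← Complex.re_sum, sum_trace_eq_card hsum, Fintype.card_fin,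
      Complex.natCast_re, Nat.cast_pow]
    field_simp
  rw [hG.iSup_eigenvalues_eq_iff_sum_eq (gram_nonneg hpsd) htotal]
  refine forall_congr' fun i => ?_
  have hreal : (E i).trace = (E i).trace.re :=
    Complex.eq_re_of_ofReal_le (r := 0) (by simpa using (hpsd i).trace_nonneg)
  rw [hreal, sum_gram_apply hsum, ← Complex.ofReal_natCast, ← Complex.ofReal_one,
    ← Complex.ofReal_div, Complex.ofReal_inj]
end

section
/- No outcome of a MIC can ever be assigned probability 1: for any MIC {E_i} and any density matrix ρ (positive semidefinite with unit trace), tr(ρ E_i) < 1 for every i. -/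
open Matrix BigOperators ComplexOrder

/-! If `tr (ρ E i) = 1`, the probabilities `tr (ρ E j)` are nonnegative and sum to one, so
`tr (ρ E j) = 0`, hence `ρ E j = 0`, for every `j ≠ i`; it follows that `ρ` commutes with every
`E j`. A MIC spans all complex matrices (a real-independent family of Hermitian matrices is
complex-independent, and there are `d²` of them), so `ρ` is central, i.e. a nonzero scalar, and
then `E j = 0` for `j ≠ i`, contradicting linear independence. -/

namespace Matrix

variable {n 𝕜 : Type*} [Fintype n] [RCLike 𝕜]

lemma trace_conjTranspose_mul_self_mul_conjTranspose_mul_self (X Y : Matrix n n 𝕜) :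
    (Xᴴ * X * (Yᴴ * Y)).trace = ((Y * Xᴴ)ᴴ * (Y * Xᴴ)).trace := by
  rw [conjTranspose_mul, conjTranspose_conjTranspose, Matrix.mul_assoc Xᴴ, trace_mul_comm Xᴴ]
  simp only [Matrix.mul_assoc]

namespace PosSemidef

variable {A B : Matrix n n 𝕜}

open scoped MatrixOrder in
lemma exists_eq_conjTranspose_mul_self (hA : A.PosSemidef) :
    ∃ X : Matrix n n 𝕜, A = Xᴴ * X := by
  classical
  exact CStarAlgebra.nonneg_iff_eq_star_mul_self.mp hA.nonneg

lemma trace_mul_nonneg_s7 (hA : A.PosSemidef) (hB : B.PosSemidef) : 0 ≤ (A * B).trace := by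
  obtain ⟨X, rfl⟩ := hA.exists_eq_conjTranspose_mul_self
  obtain ⟨Y, rfl⟩ := hB.exists_eq_conjTranspose_mul_self
  rw [trace_conjTranspose_mul_self_mul_conjTranspose_mul_self]
  exact (posSemidef_conjTranspose_mul_self _).trace_nonneg

lemma mul_eq_zero_of_trace_mul_eq_zero (hA : A.PosSemidef) (hB : B.PosSemidef)
    (h : (A * B).trace = 0) : A * B = 0 := by
  obtain ⟨X, rfl⟩ := hA.exists_eq_conjTranspose_mul_self
  obtain ⟨Y, rfl⟩ := hB.exists_eq_conjTranspose_mul_self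
  rw [trace_conjTranspose_mul_self_mul_conjTranspose_mul_self,
    trace_conjTranspose_mul_self_eq_zero_iff] at h
  have hXY : X * Yᴴ = 0 := by simpa using congrArg (fun M => Mᴴ) h
  rw [Matrix.mul_assoc, ← Matrix.mul_assoc X, hXY, Matrix.zero_mul, Matrix.mul_zero]

end PosSemidef

end Matrix

open scoped ComplexStarModule in
theorem LinearIndependent.complex_of_isSelfAdjoint {ι A : Type*} [AddCommGroup A] [Module ℂ A]
    [StarAddMonoid A] [StarModule ℂ A] {v : ι → A} (hv : ∀ i, IsSelfAdjoint (v i))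
    (h : LinearIndependent ℝ v) : LinearIndependent ℂ v := by
  rw [linearIndependent_iff'] at h ⊢
  intro s g hg i hi
  have hre : ∑ j ∈ s, (g j).re • v j = 0 := by
    simpa [realPart_smul, (hv _).imaginaryPart, (hv _).coe_realPart] using
      congrArg (fun a => (ℜ a : A)) hg
  have him : ∑ j ∈ s, (g j).im • v j = 0 := by
    simpa [imaginaryPart_smul, (hv _).imaginaryPart, (hv _).coe_realPart] using
      congrArg (fun a => (ℑ a : A)) hg
  exact Complex.ext (h s _ hre i hi) (h s _ him i hi)

theorem Finset.eq_zero_of_sum_le_of_nonneg {ι M : Type*} [AddCommMonoid M] [PartialOrder M]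
    [IsOrderedCancelAddMonoid M] {s : Finset ι} {f : ι → M} {i : ι} (hi : i ∈ s)
    (hf : ∀ j ∈ s, 0 ≤ f j) (h : ∑ j ∈ s, f j ≤ f i) :
    ∀ j ∈ s, j ≠ i → f j = 0 := by
  classical
  have hf' : ∀ j ∈ s.erase i, 0 ≤ f j := fun j hj => hf j (mem_of_mem_erase hj)
  have hrest : ∑ j ∈ s.erase i, f j = 0 := by
    rw [← add_sum_erase s f hi] at h
    exact (by simpa using h : ∑ j ∈ s.erase i, f j ≤ 0).antisymm (sum_nonneg hf')
  intro j hj hji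
  exact (sum_eq_zero_iff_of_nonneg hf').mp hrest j (mem_erase.mpr ⟨hji, hj⟩)

namespace IsMIC

variable {n m : Type*} [Fintype n] [Fintype m] [DecidableEq m] {E : n → Matrix m m ℂ}

theorem span_complex_eq_top (hE : IsMIC E) : Submodule.span ℂ (Set.range E) = ⊤ := by
  obtain ⟨hcard, hpsd, -, hlin⟩ := hE
  refine (hlin.complex_of_isSelfAdjoint fun i => (hpsd i).isHermitian)
    |>.span_eq_top_of_card_eq_finrank' ?_
  rw [Module.finrank_matrix, Module.finrank_self, mul_one, hcard, sq]

theorem mem_range_scalar_of_forall_commute (hE : IsMIC E) {X : Matrix m m ℂ}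
    (hX : ∀ i, Commute X (E i)) : X ∈ Set.range (scalar m) := by
  refine mem_range_scalar_iff_commute_single'.mpr fun k l => ?_
  refine (Commute.span_right (R := ℂ) ?_ _ (hE.span_complex_eq_top ▸ Submodule.mem_top)).symm
  rintro _ ⟨i, rfl⟩
  exact hX i

theorem commute_of_mul_eq_zero (hE : IsMIC E) {X : Matrix m m ℂ} (hX : X.IsHermitian) {i : n}
    (h : ∀ j ≠ i, X * E j = 0) (j : n) : Commute X (E j) := by
  obtain ⟨-, hpsd, hsum, -⟩ := hE
  have hswap : ∀ j, E j * X = (X * E j)ᴴ := fun j => by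
    rw [conjTranspose_mul, (hpsd j).isHermitian.eq, hX.eq]
  obtain rfl | hji := eq_or_ne j i
  · have hXE : X * E j = X := by
      rw [← Finset.sum_eq_single_of_mem j (Finset.mem_univ j) fun k _ hk => h k hk,
        ← Matrix.mul_sum, hsum, Matrix.mul_one]
    rw [Commute, SemiconjBy, hswap, hXE, hX.eq]
  · rw [Commute, SemiconjBy, hswap, h j hji, conjTranspose_zero]

theorem mul_eq_zero_of_one_le_re_trace_mul (hE : IsMIC E) {ρ : Matrix m m ℂ}
    (hρ : ρ.PosSemidef) (hρ1 : ρ.trace = 1) {i : n} (hi : 1 ≤ (ρ * E i).trace.re) :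
    ∀ j ≠ i, ρ * E j = 0 := by
  obtain ⟨-, hpsd, hsum, -⟩ := hE
  have hprob : ∀ j, 0 ≤ (ρ * E j).trace := fun j => hρ.trace_mul_nonneg_s7 (hpsd j)
  have htotal : ∑ j, (ρ * E j).trace = 1 := by
    rw [← trace_sum, ← Matrix.mul_sum, hsum, Matrix.mul_one, hρ1]
  have hle : ∑ j, (ρ * E j).trace ≤ (ρ * E i).trace := by
    rw [htotal, Complex.le_def]
    exact ⟨hi, (Complex.nonneg_iff.mp (hprob i)).2⟩
  intro j hj
  exact hρ.mul_eq_zero_of_trace_mul_eq_zero (hpsd j) <|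
    Finset.eq_zero_of_sum_le_of_nonneg (Finset.mem_univ i) (fun j _ => hprob j) hle j
      (Finset.mem_univ j) hj

end IsMIC

/-- No MIC outcome can ever be assigned probability 1: for every
density matrix `ρ` and every effect `E i`, `tr (ρ * E i) < 1`. -/
theorem stmt7 {d : ℕ} (hd : 2 ≤ d) (E : Fin (d ^ 2) → Matrix (Fin d) (Fin d) ℂ)
    (hMIC : IsMIC E) (ρ : Matrix (Fin d) (Fin d) ℂ)
    (hρ : ρ.PosSemidef) (hρ1 : ρ.trace = 1) :
    ∀ i, ((ρ * E i).trace).re < 1 := by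
  intro i
  by_contra! hi
  have hvanish := hMIC.mul_eq_zero_of_one_le_re_trace_mul hρ hρ1 hi
  obtain ⟨c, rfl⟩ := hMIC.mem_range_scalar_of_forall_commute
    (hMIC.commute_of_mul_eq_zero hρ.isHermitian hvanish)
  have hc : c ≠ 0 := by
    rintro rfl
    simp at hρ1
  have : Nontrivial (Fin (d ^ 2)) := Fin.nontrivial_iff_two_le.mpr (by nlinarith)
  obtain ⟨j, hj⟩ := exists_ne i
  apply hMIC.2.2.2.ne_zero j
  simpa [← smul_eq_diagonal_mul, hc] using hvanish j hj
end

section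
/- No effect of a MIC can be a nonzero orthogonal projector: if {E_i} is a MIC, then no E_i satisfies E_i² = E_i with E_i ≠ 0. -/
open Matrix BigOperators ComplexOrder

/-
If a MIC effect `P` is a nonzero projector, pick `v ≠ 0` with `P v = v`. The remaining effects
are positive and sum to `1 - P`, which kills `v`, so each of them kills `v`. Real linear
independence of Hermitian matrices upgrades to complex linear independence, so the `d²` effects
span all of `M_d(ℂ)`; hence every matrix has `v` as an eigenvector, which forces `d = 1`.
-/

section StarModule

variable {ι M : Type*} [Fintype ι] [AddCommGroup M] [Module ℂ M] [Module ℝ M]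
  [IsScalarTower ℝ ℂ M] [StarAddMonoid M] [StarModule ℂ M]

theorem LinearIndependent.complex_of_isSelfAdjoint_s8 {E : ι → M}
    (hE : ∀ i, IsSelfAdjoint (E i)) (h : LinearIndependent ℝ E) : LinearIndependent ℂ E := by
  rw [Fintype.linearIndependent_iff] at h ⊢
  have re_eq_zero : ∀ g : ι → ℂ, ∑ i, g i • E i = 0 → ∀ i, (g i).re = 0 := by
    intro g hg
    have hg' : ∑ i, star (g i) • E i = 0 := by
      simpa [star_sum, star_smul, (hE _).star_eq] using congrArg star hg
    refine h _ ?_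
    calc ∑ i, (g i).re • E i
        _ = (2 : ℂ)⁻¹ • (∑ i, g i • E i + ∑ i, star (g i) • E i) := by
          simp only [Finset.smul_sum, ← Finset.sum_add_distrib, ← add_smul, smul_smul]
          refine Finset.sum_congr rfl fun i _ => ?_
          rw [← algebraMap_smul ℂ (g i).re, Complex.coe_algebraMap, Complex.re_eq_add_conj,
            div_eq_inv_mul]
          rfl
        _ = 0 := by rw [hg, hg', add_zero, smul_zero]
  intro g hg i
  refine Complex.ext (re_eq_zero g hg i) ?_
  simpa using re_eq_zero (fun j => Complex.I * g j)
    (by simp_rw [mul_smul, ← Finset.smul_sum, hg, smul_zero]) i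

end StarModule

theorem Matrix.PosSemidef.mulVec_eq_zero_of_sum_mulVec_eq_zero {𝕜 ι n : Type*} [RCLike 𝕜]
    [Fintype n] {s : Finset ι} {E : ι → Matrix n n 𝕜} (hE : ∀ j ∈ s, (E j).PosSemidef)
    {v : n → 𝕜} (h : (∑ j ∈ s, E j) *ᵥ v = 0) : ∀ j ∈ s, E j *ᵥ v = 0 := by
  have hsum : ∑ j ∈ s, star v ⬝ᵥ E j *ᵥ v = 0 := by
    rw [← dotProduct_sum, ← Matrix.sum_mulVec, h, dotProduct_zero]
  intro j hj
  rw [← (hE j hj).dotProduct_mulVec_zero_iff]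
  exact (Finset.sum_eq_zero_iff_of_nonneg fun k hk => (hE k hk).dotProduct_mulVec_nonneg v).mp
    hsum j hj

theorem Matrix.exists_mulVec_eq_self_of_isIdempotentElem {K n : Type*} [Field K] [Fintype n]
    {P : Matrix n n K} (hP : IsIdempotentElem P) (hP0 : P ≠ 0) :
    ∃ v, v ≠ 0 ∧ P *ᵥ v = v := by
  classical
  obtain ⟨x, hx⟩ : ∃ x, P *ᵥ x ≠ 0 := by
    by_contra! h
    exact hP0 (Matrix.toLin'.injective (LinearMap.ext fun x => by simpa using h x))
  exact ⟨P *ᵥ x, hx, by rw [mulVec_mulVec, hP.eq]⟩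

theorem Matrix.card_eq_one_of_forall_mulVec_mem_span_singleton {K n : Type*} [Field K]
    [Fintype n] [DecidableEq n] {v : n → K} (hv : v ≠ 0)
    (h : ∀ A : Matrix n n K, A *ᵥ v ∈ K ∙ v) : Fintype.card n = 1 := by
  obtain ⟨a, ha⟩ := Function.ne_iff.mp hv
  have htop : K ∙ v = ⊤ := by
    refine Submodule.eq_top_iff'.mpr fun u => ?_
    have := Submodule.smul_mem _ (v a)⁻¹ (h (vecMulVec u (Pi.single a 1)))
    simpa [vecMulVec_mulVec, smul_smul, inv_mul_cancel₀ ha] using this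
  have := finrank_span_singleton (K := K) hv
  rwa [htop, finrank_top, Module.finrank_fintype_fun_eq_card] at this

theorem Matrix.mulVec_mem_span_singleton_of_span_eq_top {K ι n : Type*} [Field K] [Fintype n]
    {E : ι → Matrix n n K} (hE : Submodule.span K (Set.range E) = ⊤) {v : n → K}
    (hv : ∀ j, E j *ᵥ v ∈ K ∙ v) (A : Matrix n n K) : A *ᵥ v ∈ K ∙ v := by
  have hle : Submodule.span K (Set.range E) ≤ (K ∙ v).comap ((mulVecBilin K K).flip v) :=
    Submodule.span_le.mpr (Set.range_subset_iff.mpr hv)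
  exact hle (hE ▸ Submodule.mem_top : A ∈ _)

/-- No effect of a MIC can be a nonzero (unscaled) projector. -/
theorem stmt8 {d : ℕ} (hd : 2 ≤ d) (E : Fin (d ^ 2) → Matrix (Fin d) (Fin d) ℂ)
    (hMIC : IsMIC E) :
    ∀ i, ¬ (E i * E i = E i ∧ E i ≠ 0) := by
  obtain ⟨-, hpsd, hsum, hli⟩ := hMIC
  rintro i ⟨hP, hP0⟩
  obtain ⟨v, hv0, hPv⟩ := exists_mulVec_eq_self_of_isIdempotentElem hP hP0
  have hker : ∀ j ∈ Finset.univ.erase i, E j *ᵥ v = 0 :=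
    PosSemidef.mulVec_eq_zero_of_sum_mulVec_eq_zero (fun j _ => hpsd j) (by
      rw [Finset.sum_erase_eq_sub (Finset.mem_univ i), hsum, sub_mulVec, one_mulVec, hPv,
        sub_self])
  have hspan : Submodule.span ℂ (Set.range E) = ⊤ :=
    (hli.complex_of_isSelfAdjoint_s8 fun j => (hpsd j).1).span_eq_top_of_card_eq_finrank'
      (by simp [Module.finrank_matrix, sq])
  have hline : ∀ j, E j *ᵥ v ∈ ℂ ∙ v := by
    intro j
    rcases eq_or_ne j i with rfl | hj
    · rw [hPv]
      exact Submodule.mem_span_singleton_self v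
    · rw [hker j (Finset.mem_erase.mpr ⟨hj, Finset.mem_univ j⟩)]
      exact Submodule.zero_mem _
  have := card_eq_one_of_forall_mulVec_mem_span_singleton hv0
    (mulVec_mem_span_singleton_of_span_eq_top hspan hline)
  rw [Fintype.card_fin] at this
  omega
end

section
/- No two elements of a MIC in dimension 2 can be orthogonal under the Hilbert–Schmidt inner product: if {E_i}_{i=1}^{4} is a MIC on ℂ², then tr(E_i E_j) > 0 for all i, j. -/
open Matrix BigOperators ComplexOrder

/-!
Writing `A = XᴴX` and `B = YᴴY`, `tr (A B) = tr ((XYᴴ)ᴴ (XYᴴ)) ≥ 0` with equality only if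
`XYᴴ = 0`, i.e. `A B = 0`. For `2 × 2` matrices the polarized Cayley–Hamilton identity
`A B + B A = tr A • B + tr B • A - (tr A tr B - tr (A B)) • 1` then turns `A B = B A = 0` into
`A / tr A + B / tr B = 1`. For two distinct elements of a MIC this writes `∑ k, E k = 1` as a
combination of `E i` and `E j` alone, against linear independence, since there are four elements.
-/

open scoped MatrixOrder in
theorem Matrix.PosSemidef.mul_eq_zero_of_re_trace_mul_nonpos {n 𝕜 : Type*} [Fintype n]
    [RCLike 𝕜] {A B : Matrix n n 𝕜} (hA : A.PosSemidef) (hB : B.PosSemidef)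
    (h : RCLike.re (A * B).trace ≤ 0) : A * B = 0 := by
  classical
  obtain ⟨X, rfl⟩ := CStarAlgebra.nonneg_iff_eq_star_mul_self.mp hA.nonneg
  obtain ⟨Y, rfl⟩ := CStarAlgebra.nonneg_iff_eq_star_mul_self.mp hB.nonneg
  have htr : (star X * X * (star Y * Y)).trace = ((X * Yᴴ)ᴴ * (X * Yᴴ)).trace := by
    rw [← Matrix.mul_assoc, trace_mul_comm]
    simp only [star_eq_conjTranspose, conjTranspose_mul, conjTranspose_conjTranspose,
      Matrix.mul_assoc]
  have hnonneg := (posSemidef_conjTranspose_mul_self (X * Yᴴ)).trace_nonneg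
  rw [← htr] at hnonneg
  have hzero : (star X * X * (star Y * Y)).trace = 0 :=
    le_antisymm (RCLike.nonpos_iff.mpr ⟨h, (RCLike.nonneg_iff.mp hnonneg).2⟩) hnonneg
  rw [htr, trace_conjTranspose_mul_self_eq_zero_iff] at hzero
  calc star X * X * (star Y * Y) = star X * (X * Yᴴ) * Y := by
        simp only [star_eq_conjTranspose, Matrix.mul_assoc]
    _ = 0 := by rw [hzero, Matrix.mul_zero, Matrix.zero_mul]

theorem Matrix.PosSemidef.exists_trace_eq_ofReal_pos {n : Type*} [Fintype n]
    {A : Matrix n n ℂ} (hA : A.PosSemidef) (hA0 : A ≠ 0) : ∃ a : ℝ, 0 < a ∧ A.trace = a := by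
  obtain ⟨a, ha, hta⟩ := RCLike.nonneg_iff_exists_ofReal.mp hA.trace_nonneg
  refine ⟨a, ha.lt_of_ne ?_, hta.symm⟩
  rintro rfl
  exact hA0 (hA.trace_eq_zero_iff.mp (by simp [← hta]))

theorem Matrix.fin_two_mul_add_mul {R : Type*} [CommRing R] (A B : Matrix (Fin 2) (Fin 2) R) :
    A * B + B * A = A.trace • B + B.trace • A - (A.trace * B.trace - (A * B).trace) • 1 := by
  ext i j
  fin_cases i <;> fin_cases j <;>
    simp [trace_fin_two, mul_apply, Fin.sum_univ_two] <;> ring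

theorem Matrix.PosSemidef.inv_trace_smul_add_inv_trace_smul_eq_one
    {A B : Matrix (Fin 2) (Fin 2) ℂ} (hA : A.PosSemidef) (hB : B.PosSemidef)
    (hA0 : A ≠ 0) (hB0 : B ≠ 0) (hAB : A * B = 0) :
    (A.trace.re)⁻¹ • A + (B.trace.re)⁻¹ • B = 1 := by
  have hBA : B * A = 0 := by
    simpa [hA.isHermitian.eq, hB.isHermitian.eq] using congrArg Matrix.conjTranspose hAB
  obtain ⟨a, ha, hta⟩ := hA.exists_trace_eq_ofReal_pos hA0
  obtain ⟨b, hb, htb⟩ := hB.exists_trace_eq_ofReal_pos hB0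
  have key := fin_two_mul_add_mul A B
  rw [hAB, hBA, trace_zero, hta, htb, add_zero, sub_zero, eq_comm, sub_eq_zero] at key
  simp only [Complex.coe_smul, ← Complex.ofReal_mul] at key
  simp only [hta, htb, Complex.ofReal_re]
  refine smul_right_injective _ (mul_pos ha hb).ne' ?_
  dsimp only
  rw [smul_add, smul_smul, smul_smul, ← key, mul_inv_cancel_right₀ hb.ne',
    mul_comm a b, mul_inv_cancel_right₀ ha.ne', add_comm]

theorem LinearIndependent.sum_ne_smul_add_smul {ι R M : Type*} [Fintype ι] [Ring R]
    [Nontrivial R] [AddCommGroup M] [Module R M] {v : ι → M} (hv : LinearIndependent R v)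
    {i j k : ι} (hki : k ≠ i) (hkj : k ≠ j) (a b : R) : ∑ l, v l ≠ a • v i + b • v j := by
  classical
  intro h
  have hcoeff := Fintype.linearIndependent_iff.mp hv
    (fun l => 1 - (if l = i then a else 0) - (if l = j then b else 0)) (by
      simp only [sub_smul, one_smul, ite_smul, zero_smul, Finset.sum_sub_distrib,
        Finset.sum_ite_eq', Finset.mem_univ, if_true, h]
      abel) k
  simp [hki, hkj] at hcoeff

/-- No two elements of a MIC in dimension 2 can be orthogonal
under the Hilbert–Schmidt inner product. -/
theorem stmt10 (E : Fin (2 ^ 2) → Matrix (Fin 2) (Fin 2) ℂ)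
    (hMIC : IsMIC E) :
    ∀ i j, 0 < ((E i * E j).trace).re := by
  obtain ⟨-, hpsd, hsum, hli⟩ := hMIC
  intro i j
  by_contra! h
  have hEij : E i * E j = 0 := (hpsd i).mul_eq_zero_of_re_trace_mul_nonpos (hpsd j) h
  rcases eq_or_ne i j with rfl | hij
  · have hEi : (E i)ᴴ * E i = 0 := by rwa [(hpsd i).isHermitian.eq]
    exact hli.ne_zero i (conjTranspose_mul_self_eq_zero.mp hEi)
  · obtain ⟨k, hki, hkj⟩ := (by decide : ∀ i j : Fin (2 ^ 2), ∃ k, k ≠ i ∧ k ≠ j) i j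
    have hone := (hpsd i).inv_trace_smul_add_inv_trace_smul_eq_one (hpsd j) (hli.ne_zero i)
      (hli.ne_zero j) hEij
    exact hli.sum_ne_smul_add_smul hki hkj _ _ (hsum.trans hone.symm)
end

section
/- Let |φ_1⟩,...,|φ_N⟩ be unit vectors in ℂ^d and e_1,...,e_N ∈ [0,1]. The operators E_i = e_i |φ_i⟩⟨φ_i| form a POVM (i.e., Σ_i E_i = I) if and only if the N×N Gram matrix g of the rescaled vectors √e_i |φ_i⟩, with entries g_ij = √(e_i e_j) ⟨φ_i|φ_j⟩, is a projection matrix of rank d. -/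
open Matrix ComplexOrder

/-!
Let `A` be the `d × N` matrix whose `i`-th column is `√(e i) • φ i`. Then `∑ i, E i = A * Aᴴ`
and `g = Aᴴ * A`. If `A * Aᴴ = 1`, then `g * g = Aᴴ * (A * Aᴴ) * A = g`, and
`rank g = rank A = rank (A * Aᴴ) = d`. Conversely, `rank (A * Aᴴ) = rank g = d` makes `A * Aᴴ`
invertible, while `(A * Aᴴ) ^ 3 = A * (g * g) * Aᴴ = (A * Aᴴ) ^ 2`; cancelling gives `A * Aᴴ = 1`.
-/

namespace Matrix

theorem isUnit_of_rank_eq_card {n K : Type*} [Fintype n] [DecidableEq n] [Field K]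
    {A : Matrix n n K} (h : A.rank = Fintype.card n) : IsUnit A := by
  rw [← mulVec_surjective_iff_isUnit, ← coe_mulVecLin, ← LinearMap.range_eq_top]
  exact Submodule.eq_top_of_finrank_eq (by simpa [rank] using h)

theorem mul_conjTranspose_eq_one_iff {m n K : Type*} [Fintype m] [Fintype n] [DecidableEq m]
    [Field K] [PartialOrder K] [StarRing K] [StarOrderedRing K] (A : Matrix m n K) :
    A * Aᴴ = 1 ↔ IsIdempotentElem (Aᴴ * A) ∧ (Aᴴ * A).rank = Fintype.card m := by
  rw [rank_conjTranspose_mul_self, ← rank_self_mul_conjTranspose]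
  constructor
  · intro h
    refine ⟨?_, by rw [h, rank_one]⟩
    calc Aᴴ * A * (Aᴴ * A) = Aᴴ * (A * Aᴴ) * A := by simp only [Matrix.mul_assoc]
      _ = Aᴴ * A := by rw [h, Matrix.mul_one]
  · rintro ⟨hidem, hrank⟩
    have hunit : IsUnit (A * Aᴴ) := isUnit_of_rank_eq_card hrank
    have hcube : A * Aᴴ * (A * Aᴴ) * (A * Aᴴ) = A * Aᴴ * (A * Aᴴ) * 1 := by
      calc A * Aᴴ * (A * Aᴴ) * (A * Aᴴ) = A * (Aᴴ * A * (Aᴴ * A)) * Aᴴ := by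
            simp only [Matrix.mul_assoc]
        _ = A * Aᴴ * (A * Aᴴ) * 1 := by
            rw [hidem.eq]; simp only [Matrix.mul_assoc, Matrix.mul_one]
    exact (hunit.mul hunit).mul_left_cancel hcube

end Matrix

section WeightedFrame

variable {ι n : Type*} (e : ι → ℝ) (φ : ι → n → ℂ)

noncomputable def weightedFrame : Matrix n ι ℂ :=
  of fun k i => (Real.sqrt (e i) : ℂ) * φ i k

theorem weightedFrame_mul_conjTranspose [Fintype ι] (he : ∀ i, 0 ≤ e i) :
    weightedFrame e φ * (weightedFrame e φ)ᴴ =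
      ∑ i, (e i : ℂ) • vecMulVec (φ i) (star (φ i)) := by
  ext k l
  simp only [weightedFrame, mul_apply, conjTranspose_apply, of_apply,
    Matrix.sum_apply, Matrix.smul_apply, vecMulVec_apply, Pi.star_apply, smul_eq_mul, star_mul',
    RCLike.star_def, Complex.conj_ofReal]
  refine Finset.sum_congr rfl fun i _ => ?_
  have hsqrt : (Real.sqrt (e i) : ℂ) * Real.sqrt (e i) = e i := by
    rw [← Complex.ofReal_mul, Real.mul_self_sqrt (he i)]
  linear_combination (φ i k * (starRingEnd ℂ) (φ i l)) * hsqrt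

theorem conjTranspose_mul_weightedFrame_apply [Fintype n] (i j : ι) :
    ((weightedFrame e φ)ᴴ * weightedFrame e φ) i j =
      (Real.sqrt (e i) * Real.sqrt (e j) : ℝ) * (star (φ i) ⬝ᵥ φ j) := by
  simp only [weightedFrame, mul_apply, conjTranspose_apply, of_apply, dotProduct, Pi.star_apply,
    star_mul', RCLike.star_def, Complex.conj_ofReal, Complex.ofReal_mul, Finset.mul_sum]
  exact Finset.sum_congr rfl fun k _ => by ring

end WeightedFrame

theorem stmt11_general {d N : ℕ} (φ : Fin N → (Fin d → ℂ))
    (e : Fin N → ℝ) (he : ∀ i, e i ∈ Set.Icc (0 : ℝ) 1)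
    (g : Matrix (Fin N) (Fin N) ℂ)
    (hg : ∀ i j, g i j = (Real.sqrt (e i) * Real.sqrt (e j) : ℝ) * (star (φ i) ⬝ᵥ φ j)) :
    (∑ i, (e i : ℂ) • Matrix.vecMulVec (φ i) (star (φ i)) = 1) ↔
      (g * g = g ∧ g.rank = d) := by
  have hgram : g = (weightedFrame e φ)ᴴ * weightedFrame e φ := by
    ext i j
    rw [hg, conjTranspose_mul_weightedFrame_apply]
  rw [← weightedFrame_mul_conjTranspose e φ fun i => (he i).1, mul_conjTranspose_eq_one_iff,
    ← hgram, Fintype.card_fin]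
  rfl

/-- unit vectors `φ i` and weights `e i ∈ [0,1]` give a rank-1
POVM `E i = e i • |φ i⟩⟨φ i|` iff the Gram matrix `g` of the rescaled vectors
`√(e i) • φ i` is a projection of rank `d`. -/
theorem stmt11 {d N : ℕ} (hd : 0 < d) (φ : Fin N → (Fin d → ℂ))
    (hφ : ∀ i, star (φ i) ⬝ᵥ φ i = 1)
    (e : Fin N → ℝ) (he : ∀ i, e i ∈ Set.Icc (0 : ℝ) 1)
    (g : Matrix (Fin N) (Fin N) ℂ)
    (hg : ∀ i j, g i j = (Real.sqrt (e i) * Real.sqrt (e j) : ℝ) * (star (φ i) ⬝ᵥ φ j)) :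
    (∑ i, (e i : ℂ) • Matrix.vecMulVec (φ i) (star (φ i)) = 1) ↔
      (g * g = g ∧ g.rank = d) :=
  stmt11_general φ e he g hg
end

section
/- Among unbiased MICs, the squared Frobenius distance between the MIC's Gram matrix G and the diagonal matrix (1/d)I satisfies Σ_ij ((1/d)δ_ij − tr(E_i E_j))² ≥ (d−1)/(d+1), with equality if and only if the MIC is a SIC (rank-1 and equiangular with tr(E_i E_j) = (dδ_ij+1)/(d²(d+1))). -/
/-!
Let `G` be the Gram matrix `tr (E i * E j)` and `S` that of a SIC. Both have total sum `d` (for `G`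
because `∑ E = 1` and `tr E i = 1/d`), `tr S = 1`, and `tr G ≤ 1` because
`tr (E i ^ 2) ≤ (tr E i) ^ 2 = 1/d²` for positive semidefinite `E i`. Expanding the square
around `S`,
  `‖I/d - G‖² = (d-1)/(d+1) + 2 (1 - tr G)/(d+1) + ‖G - S‖²`,
so the bound holds, with equality exactly when `G = S`. Then `tr (E i ^ 2) = (tr E i) ^ 2`, which
forces `E i` to have a single nonzero eigenvalue, i.e. rank one.
-/

open Matrix BigOperators ComplexOrder

open Finset

theorem card_ne_zero_eq_one_of_sum_sq_eq_sq_sum {ι : Type*} [Fintype ι] {x : ι → ℝ}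
    (hx : ∀ i, 0 ≤ x i) (hs : ∑ i, x i ≠ 0) (heq : ∑ i, x i ^ 2 = (∑ i, x i) ^ 2) :
    Fintype.card {i // x i ≠ 0} = 1 := by
  classical
  have hle : ∀ i, x i ≤ ∑ j, x j := fun i => single_le_sum (fun j _ => hx j) (mem_univ i)
  have hzero_or_sum : ∀ i, x i * (∑ j, x j - x i) = 0 := by
    have hsum : ∑ i, x i * (∑ j, x j - x i) = 0 := by
      simp only [mul_sub, sum_sub_distrib, ← sum_mul, ← sq, heq, sub_self]
    exact fun i => (sum_eq_zero_iff_of_nonneg fun j _ => mul_nonneg (hx j)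
      (sub_nonneg.2 (hle j))).1 hsum i (mem_univ i)
  obtain ⟨i, hi⟩ : ∃ i, x i ≠ 0 := by
    by_contra! h
    exact hs (sum_eq_zero fun i _ => h i)
  have hxi : x i = ∑ j, x j := by
    linarith [(mul_eq_zero.1 (hzero_or_sum i)).resolve_left hi]
  have hrest : ∑ j ∈ univ.erase i, x j = 0 := by
    linarith [add_sum_erase univ x (mem_univ i)]
  rw [Fintype.card_eq_one_iff]
  refine ⟨⟨i, hi⟩, fun ⟨j, hj⟩ => Subtype.ext ?_⟩
  by_contra hji
  exact hj ((sum_eq_zero_iff_of_nonneg fun k _ => hx k).1 hrest j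
    (mem_erase.2 ⟨hji, mem_univ j⟩))

theorem Matrix.IsHermitian.trace_mul_self_eq_sum_eigenvalues_sq {𝕜 m : Type*} [RCLike 𝕜]
    [Fintype m] [DecidableEq m] {A : Matrix m m 𝕜} (hA : A.IsHermitian) :
    (A * A).trace = ∑ i, ((hA.eigenvalues i ^ 2 : ℝ) : 𝕜) := by
  conv_lhs => rw [hA.spectral_theorem, ← map_mul, Unitary.conjStarAlgAut_apply, trace_mul_cycle,
    Unitary.coe_star_mul_self, one_mul]
  simp [diagonal_mul_diagonal, trace_diagonal, sq]

theorem Matrix.PosSemidef.re_trace_mul_self_le {𝕜 m : Type*} [RCLike 𝕜]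
    [Fintype m] [DecidableEq m] {A : Matrix m m 𝕜} (hA : A.PosSemidef) :
    RCLike.re (A * A).trace ≤ RCLike.re A.trace ^ 2 := by
  rw [hA.1.trace_mul_self_eq_sum_eigenvalues_sq, hA.1.trace_eq_sum_eigenvalues]
  simp only [map_sum, RCLike.ofReal_re]
  exact sum_sq_le_sq_sum_of_nonneg fun i _ => hA.eigenvalues_nonneg i

theorem Matrix.PosSemidef.rank_eq_one_of_re_trace_mul_self_eq {𝕜 m : Type*} [RCLike 𝕜]
    [Fintype m] [DecidableEq m] {A : Matrix m m 𝕜} (hA : A.PosSemidef) (htr : A.trace ≠ 0)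
    (h : RCLike.re (A * A).trace = RCLike.re A.trace ^ 2) : A.rank = 1 := by
  rw [hA.1.trace_mul_self_eq_sum_eigenvalues_sq, hA.1.trace_eq_sum_eigenvalues] at *
  simp only [map_sum, RCLike.ofReal_re] at h
  rw [hA.1.rank_eq_card_non_zero_eigs]
  refine card_ne_zero_eq_one_of_sum_sq_eq_sq_sum hA.eigenvalues_nonneg (fun h0 => htr ?_) h
  rw [← RCLike.ofReal_sum, h0, RCLike.ofReal_zero]

theorem Matrix.sum_trace_mul_eq_trace {R m ι : Type*} [Semiring R] [Fintype m] [DecidableEq m]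
    [Fintype ι] {E : ι → Matrix m m R} (hE : ∑ i, E i = 1) (A : Matrix m m R) :
    ∑ i, (A * E i).trace = A.trace := by
  rw [← trace_sum, ← mul_sum, hE, mul_one]

noncomputable def sicOverlap {ι : Type*} [DecidableEq ι] (d : ℝ) (i j : ι) : ℝ :=
  (d * (if i = j then 1 else 0) + 1) / (d ^ 2 * (d + 1))

section Overlaps

variable {ι : Type*} [Fintype ι] [DecidableEq ι] {d : ℝ}

theorem sum_sicOverlap_diag (hcard : (Fintype.card ι : ℝ) = d ^ 2) (hd : d ≠ 0)
    (hd1 : d + 1 ≠ 0) : ∑ i : ι, sicOverlap d i i = 1 := by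
  simp only [sicOverlap, ↓reduceIte, mul_one, sum_const, card_univ, nsmul_eq_mul, hcard]
  field_simp

theorem sum_sicOverlap (hcard : (Fintype.card ι : ℝ) = d ^ 2) (hd : d ≠ 0)
    (hd1 : d + 1 ≠ 0) :
    ∑ i : ι, ∑ j, sicOverlap d i j = d := by
  simp only [sicOverlap, mul_ite, mul_one, mul_zero, ← sum_div, sum_add_distrib, sum_ite_eq,
    mem_univ, ↓reduceIte, sum_const, card_univ, nsmul_eq_mul, hcard]
  field_simp
  ring

theorem sum_sq_diag_sub_eq (hcard : (Fintype.card ι : ℝ) = d ^ 2) (hd : d ≠ 0)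
    (hd1 : d + 1 ≠ 0) {G : ι → ι → ℝ} (htot : ∑ i, ∑ j, G i j = d) :
    ∑ i, ∑ j, ((1 / d) * (if i = j then 1 else 0) - G i j) ^ 2 =
      (d - 1) / (d + 1) + 2 * (1 - ∑ i, G i i) / (d + 1) +
        ∑ i, ∑ j, (G i j - sicOverlap d i j) ^ 2 := by
  have hpt : ∀ i j, ((1 / d) * (if i = j then 1 else 0) - G i j) ^ 2 =
      (G i j - sicOverlap d i j) ^ 2 - 2 / (d + 1) * (if i = j then G i j - sicOverlap d i j else 0)
        + 2 / (d ^ 2 * (d + 1)) * (G i j - sicOverlap d i j)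
        + (if i = j then (d - 1) ^ 2 / d ^ 4 - 1 / (d ^ 2 * (d + 1)) ^ 2 else 0)
        + 1 / (d ^ 2 * (d + 1)) ^ 2 := by
    intro i j
    -- `(1/d) δ - S = δ/(d+1) - 1/(d²(d+1))`, then expand `((1/d) δ - S - (G - S))²`.
    unfold sicOverlap
    split_ifs <;> field_simp <;> ring
  simp only [hpt, sum_add_distrib, sum_sub_distrib, ← mul_sum, sum_ite_eq, mem_univ, if_true,
    sum_const, card_univ, nsmul_eq_mul, htot, sum_sicOverlap hcard hd hd1,
    sum_sicOverlap_diag hcard hd hd1, hcard]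
  field_simp
  ring

theorem le_sum_sq_diag_sub_and_eq_iff (hcard : (Fintype.card ι : ℝ) = d ^ 2) (hd : 0 < d)
    {G : ι → ι → ℝ} (htot : ∑ i, ∑ j, G i j = d) (hdiag : ∑ i, G i i ≤ 1) :
    (d - 1) / (d + 1) ≤ ∑ i, ∑ j, ((1 / d) * (if i = j then 1 else 0) - G i j) ^ 2 ∧
      (∑ i, ∑ j, ((1 / d) * (if i = j then 1 else 0) - G i j) ^ 2 = (d - 1) / (d + 1) ↔
        ∀ i j, G i j = sicOverlap d i j) := by
  have hd1 : d + 1 ≠ 0 := by positivity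
  rw [sum_sq_diag_sub_eq hcard hd.ne' hd1 htot]
  have hdiag' : 0 ≤ 2 * (1 - ∑ i, G i i) / (d + 1) := div_nonneg (by linarith) (by linarith)
  have hdev : 0 ≤ ∑ i, ∑ j, (G i j - sicOverlap d i j) ^ 2 := by positivity
  refine ⟨by linarith, fun h i j => ?_, fun h => ?_⟩
  · have hrows := (Fintype.sum_eq_zero_iff_of_nonneg fun i => by positivity).1
      (show ∑ i, ∑ j, (G i j - sicOverlap d i j) ^ 2 = 0 by linarith)
    have hentries := (Fintype.sum_eq_zero_iff_of_nonneg fun j => sq_nonneg _).1 (congrFun hrows i)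
    exact sub_eq_zero.1 (pow_eq_zero_iff two_ne_zero |>.1 (congrFun hentries j))
  · simp [h, sum_sicOverlap_diag hcard hd.ne' hd1]

end Overlaps

theorem sum_gram {m ι : Type*} [Fintype m] [DecidableEq m] [Fintype ι] {E : ι → Matrix m m ℂ}
    (hE : ∑ i, E i = 1) : ∑ i, ∑ j, _root_.gram E i j = ∑ i, (E i).trace.re := by
  simp only [_root_.gram, of_apply, ← Complex.re_sum, sum_trace_mul_eq_trace hE]

/-- for an unbiased MIC, the squared Frobenius distance between
its Gram matrix and `(1/d)·I` is at least `(d−1)/(d+1)`, with equality iff the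
MIC is a SIC (rank-1 and equiangular with `tr(E i E j) = (dδ_ij+1)/(d²(d+1))`). -/
theorem stmt18 {d : ℕ} (hd : 0 < d)
    (E : Fin (d ^ 2) → Matrix (Fin d) (Fin d) ℂ) (hMIC : IsMIC E)
    (hunb : ∀ i, (E i).trace = (1 / d : ℂ)) :
    ((d : ℝ) - 1) / (d + 1) ≤
      ∑ i, ∑ j, ((1 / d) * (if i = j then 1 else 0) - ((E i * E j).trace).re) ^ 2 ∧
    ((∑ i, ∑ j, ((1 / d) * (if i = j then 1 else 0) - ((E i * E j).trace).re) ^ 2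
        = ((d : ℝ) - 1) / (d + 1)) ↔
      ((∀ i, (E i).rank = 1) ∧
        ∀ i j, ((E i * E j).trace).re =
          ((d : ℝ) * (if i = j then 1 else 0) + 1) / (d ^ 2 * (d + 1)))) := by
  obtain ⟨-, hpsd, hsum, -⟩ := hMIC
  have hdR : (0 : ℝ) < d := by exact_mod_cast hd
  have hcard : (Fintype.card (Fin (d ^ 2)) : ℝ) = (d : ℝ) ^ 2 := by simp
  have htr : ∀ i, (E i).trace.re = 1 / d := fun i => by simp [hunb]
  have htot : ∑ i, ∑ j, _root_.gram E i j = d := by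
    simp only [sum_gram hsum, htr, sum_const, card_univ, hcard, nsmul_eq_mul]
    field_simp
  have hdiag : ∑ i, _root_.gram E i i ≤ 1 := calc
    ∑ i, _root_.gram E i i ≤ ∑ _i : Fin (d ^ 2), (1 / (d : ℝ)) ^ 2 :=
      sum_le_sum fun i _ => htr i ▸ (hpsd i).re_trace_mul_self_le
    _ = 1 := by simp only [sum_const, card_univ, hcard, nsmul_eq_mul]; field_simp
  obtain ⟨hle, hiff⟩ := le_sum_sq_diag_sub_and_eq_iff hcard hdR htot hdiag
  refine ⟨hle, hiff.trans ⟨fun hsic => ⟨fun i => ?_, hsic⟩, And.right⟩⟩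
  refine (hpsd i).rank_eq_one_of_re_trace_mul_self_eq (by simp [hunb, hd.ne']) ?_
  calc RCLike.re (E i * E i).trace = sicOverlap d i i := hsic i i
    _ = RCLike.re (E i).trace ^ 2 := by
      simp only [sicOverlap, if_true, mul_one, RCLike.re_to_complex, htr]
      field_simp
end
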